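/- arXiv:2112.00519 — 8 statements merged into one kernel-verified Lean document; each statement's English description precedes it below -/
import Mathlib

section
/- For any two distinct vertices u, v ∈ V, the squared Euclidean distance between x_v and x_u equals 2M² + 2n + 2 if u and v are adjacent in G, and equals 2M² + 2n if u and v are not adjacent in G. -/
open Finset

/-- For distinct vertices `u, v`, the squared Euclidean distance between
`x_u` and `x_v` is `2M² + 2n + 2` if `u` and `v` are adjacent in `G`, and `2M² + 2n`
otherwise. Here `E` (with maps `tail`, `head`) encodes the oriented auxiliary multigraph
`G'`: its non-loop edges are exactly the edges of `G` (each occurring once), and each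
vertex `v` carries `n - deg_G(v)` loops (encoded as edges with `tail e = head e = v`,
regarded as incoming). -/
theorem geometric_median_squared_distance
    {V E : Type*} [Fintype V] [DecidableEq V] [Fintype E] [DecidableEq E]
    (G : SimpleGraph V) [DecidableRel G.Adj]
    (tail head : E → V)
    (hadj : ∀ e : E, tail e ≠ head e → G.Adj (tail e) (head e))
    (hinj : ∀ e₁ e₂ : E, tail e₁ ≠ head e₁ → tail e₂ ≠ head e₂ →
      (s(tail e₁, head e₁) : Sym2 V) = s(tail e₂, head e₂) → e₁ = e₂)
    (hsurj : ∀ u v : V, G.Adj u v → ∃ e : E, (s(tail e, head e) : Sym2 V) = s(u, v))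
    (hloops : ∀ v : V, (Finset.univ.filter fun e : E => tail e = v ∧ head e = v).card
        = Fintype.card V - G.degree v)
    (M : ℝ) (hM : 0 < M)
    (x : V → EuclideanSpace ℝ (E ⊕ V))
    (hxE : ∀ (v : V) (e : E),
      x v (Sum.inl e) = if head e = v then -1 else if tail e = v then 1 else 0)
    (hxV : ∀ v u : V, x v (Sum.inr u) = if u = v then M else 0)
    (u v : V) (huv : u ≠ v) :
    ‖x u - x v‖ ^ 2 =
      if G.Adj u v then 2 * M ^ 2 + 2 * (Fintype.card V : ℝ) + 2
      else 2 * M ^ 2 + 2 * (Fintype.card V : ℝ) := by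
  classical
  -- incidence count: every vertex is incident to exactly n edges of E
  have hinc : ∀ w : V,
      ((Finset.univ.filter fun e : E => tail e = w ∨ head e = w).card : ℝ)
        = Fintype.card V := by
    intro w
    have hsplit :
        ((Finset.univ.filter fun e : E => tail e = w ∨ head e = w).filter
            (fun e => tail e = head e)).card +
        ((Finset.univ.filter fun e : E => tail e = w ∨ head e = w).filter
            (fun e => ¬ tail e = head e)).card
          = (Finset.univ.filter fun e : E => tail e = w ∨ head e = w).card :=
      Finset.card_filter_add_card_filter_not _
    have h1 : ((Finset.univ.filter fun e : E => tail e = w ∨ head e = w).filter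
            (fun e => tail e = head e))
        = Finset.univ.filter fun e : E => tail e = w ∧ head e = w := by
      ext e
      simp only [Finset.mem_filter, Finset.mem_univ, true_and]
      constructor
      · rintro ⟨h, he⟩
        rcases h with h | h
        · exact ⟨h, he ▸ h⟩
        · exact ⟨he.trans h, h⟩
      · rintro ⟨ha, hb⟩
        exact ⟨Or.inl ha, ha.trans hb.symm⟩
    have h2 : ((Finset.univ.filter fun e : E => tail e = w ∨ head e = w).filter
            (fun e => ¬ tail e = head e)).card = G.degree w := by
      rw [← SimpleGraph.card_neighborFinset_eq_degree]
      apply Finset.card_bij (fun e _ => if tail e = w then head e else tail e)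
      · intro e he
        simp only [Finset.mem_filter, Finset.mem_univ, true_and] at he
        obtain ⟨hw, hne⟩ := he
        rw [SimpleGraph.mem_neighborFinset]
        by_cases ht : tail e = w
        · simp only [ht, if_pos]
          exact ht ▸ hadj e hne
        · simp only [ht, if_neg]
          rcases hw with h | h
          · exact absurd h ht
          · exact h ▸ (hadj e hne).symm
      · intro e₁ h₁ e₂ h₂ heq
        simp only [Finset.mem_filter, Finset.mem_univ, true_and] at h₁ h₂
        have key : ∀ e, ((tail e = w ∨ head e = w) ∧ ¬ tail e = head e) →
            (s(tail e, head e) : Sym2 V) = s(w, if tail e = w then head e else tail e) := by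
          rintro e ⟨hw, hne⟩
          by_cases ht : tail e = w
          · simp [ht]
          · rcases hw with h | h
            · exact absurd h ht
            · simp [ht, h, Sym2.eq_swap]
        apply hinj e₁ e₂ h₁.2 h₂.2
        rw [key e₁ h₁, key e₂ h₂, heq]
      · intro b hb
        rw [SimpleGraph.mem_neighborFinset] at hb
        obtain ⟨e, he⟩ := hsurj w b hb
        rw [Sym2.eq_iff] at he
        have hbw : w ≠ b := hb.ne
        rcases he with ⟨ha, hb'⟩ | ⟨ha, hb'⟩
        · refine ⟨e, ?_, ?_⟩
          · simp only [Finset.mem_filter, Finset.mem_univ, true_and]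
            exact ⟨Or.inl ha, by rw [ha, hb']; exact hbw⟩
          · simp [ha, hb']
        · refine ⟨e, ?_, ?_⟩
          · simp only [Finset.mem_filter, Finset.mem_univ, true_and]
            exact ⟨Or.inr hb', by rw [ha, hb']; exact hbw.symm⟩
          · have hne : tail e ≠ w := by rw [ha]; exact hbw.symm
            simp only [if_neg hne]
            exact ha
    have hdeg : G.degree w ≤ Fintype.card V := (G.degree_lt_card_verts w).le
    have : (Finset.univ.filter fun e : E => tail e = w ∨ head e = w).card
        = Fintype.card V := by
      rw [← hsplit, h1, h2, hloops w, Nat.sub_add_cancel hdeg]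
    rw [this]
  -- the Sym2 filter counting the (unique) edge between u and v
  have hcross : ((Finset.univ.filter
      fun e : E => (s(tail e, head e) : Sym2 V) = s(u, v)).card : ℝ)
        = if G.Adj u v then 1 else 0 := by
    by_cases hA : G.Adj u v
    · rw [if_pos hA]
      obtain ⟨e₀, he₀⟩ := hsurj u v hA
      have hset : (Finset.univ.filter
          fun e : E => (s(tail e, head e) : Sym2 V) = s(u, v)) = {e₀} := by
        ext e
        simp only [Finset.mem_filter, Finset.mem_univ, true_and, Finset.mem_singleton]
        constructor
        · intro he
          have hne : ∀ e' : E, (s(tail e', head e') : Sym2 V) = s(u, v) →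
              tail e' ≠ head e' := by
            intro e' h' hc
            rw [Sym2.eq_iff] at h'
            rcases h' with ⟨h1', h2'⟩ | ⟨h1', h2'⟩ <;>
              exact huv (by rw [← h1', ← h2', hc])
          exact hinj e e₀ (hne e he) (hne e₀ he₀) (he.trans he₀.symm)
        · rintro rfl; exact he₀
      rw [hset, Finset.card_singleton, Nat.cast_one]
    · rw [if_neg hA]
      have hset : (Finset.univ.filter
          fun e : E => (s(tail e, head e) : Sym2 V) = s(u, v)) = ∅ := by
        ext e
        simp only [Finset.mem_filter, Finset.mem_univ, true_and,
          Finset.notMem_empty, iff_false]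
        intro he
        have hne : tail e ≠ head e := by
          intro hc
          rw [Sym2.eq_iff] at he
          rcases he with ⟨h1', h2'⟩ | ⟨h1', h2'⟩ <;>
            exact huv (by rw [← h1', ← h2', hc])
        have := hadj e hne
        rw [Sym2.eq_iff] at he
        rcases he with ⟨h1', h2'⟩ | ⟨h1', h2'⟩
        · exact hA (h1' ▸ h2' ▸ this)
        · exact hA (h1' ▸ h2' ▸ this.symm)
      rw [hset, Finset.card_empty, Nat.cast_zero]
  -- expand the norm
  have hnorm : ‖x u - x v‖ ^ 2 = ∑ i, ((x u - x v) i) ^ 2 := by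
    rw [EuclideanSpace.norm_eq, Real.sq_sqrt (by positivity)]
    simp [sq_abs]
  have happly : ∀ i : E ⊕ V, (x u - x v) i = x u i - x v i := fun _ => rfl
  rw [hnorm]
  simp only [happly]
  rw [Fintype.sum_sum_type]
  -- the V-part
  have hVpart : ∑ w : V, (x u (Sum.inr w) - x v (Sum.inr w)) ^ 2 = 2 * M ^ 2 := by
    have : ∀ w : V, (x u (Sum.inr w) - x v (Sum.inr w)) ^ 2
        = (if w = u then M ^ 2 else 0) + (if w = v then M ^ 2 else 0) := by
      intro w
      rw [hxV, hxV]
      by_cases h1 : w = u <;> by_cases h2 : w = v <;>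
        simp_all [neg_sq] <;> ring
    rw [Finset.sum_congr rfl fun w _ => this w, Finset.sum_add_distrib,
      Finset.sum_ite_eq' Finset.univ u (fun _ => M ^ 2),
      Finset.sum_ite_eq' Finset.univ v (fun _ => M ^ 2)]
    simp; ring
  -- the E-part
  have hEpt : ∀ e : E, (x u (Sum.inl e) - x v (Sum.inl e)) ^ 2
      = (if tail e = u ∨ head e = u then (1:ℝ) else 0)
      + (if tail e = v ∨ head e = v then (1:ℝ) else 0)
      + (if (s(tail e, head e) : Sym2 V) = s(u, v) then (2:ℝ) else 0) := by
    intro e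
    rw [hxE, hxE]
    have hsym : ((s(tail e, head e) : Sym2 V) = s(u, v))
        ↔ (tail e = u ∧ head e = v) ∨ (tail e = v ∧ head e = u) := Sym2.eq_iff
    rw [if_congr hsym rfl rfl]
    by_cases h1 : head e = u <;> by_cases h2 : head e = v <;>
      by_cases h3 : tail e = u <;> by_cases h4 : tail e = v <;>
      simp only [h1, h2, h3, h4, if_true, if_false, true_or, or_true, false_or, or_false,
        true_and, and_true, false_and, and_false, if_neg, if_pos, not_false_iff,
        if_neg huv, if_neg (Ne.symm huv), or_self] <;>
      ring
  have hEpart : ∑ e : E, (x u (Sum.inl e) - x v (Sum.inl e)) ^ 2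
      = 2 * (Fintype.card V : ℝ) + (if G.Adj u v then 2 else 0) := by
    rw [Finset.sum_congr rfl fun e _ => hEpt e]
    rw [Finset.sum_add_distrib, Finset.sum_add_distrib]
    have e1 : ∑ e : E, (if tail e = u ∨ head e = u then (1:ℝ) else 0)
        = (Fintype.card V : ℝ) := by
      rw [Finset.sum_boole]; exact hinc u
    have e2 : ∑ e : E, (if tail e = v ∨ head e = v then (1:ℝ) else 0)
        = (Fintype.card V : ℝ) := by
      rw [Finset.sum_boole]; exact hinc v
    have e3 : ∑ e : E, (if (s(tail e, head e) : Sym2 V) = s(u, v) then (2:ℝ) else 0)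
        = if G.Adj u v then 2 else 0 := by
      have : ∀ e : E, (if (s(tail e, head e) : Sym2 V) = s(u, v) then (2:ℝ) else 0)
          = 2 * (if (s(tail e, head e) : Sym2 V) = s(u, v) then (1:ℝ) else 0) := by
        intro e; split <;> ring
      rw [Finset.sum_congr rfl fun e _ => this e, ← Finset.mul_sum,
        Finset.sum_boole, hcross]
      split <;> ring
    rw [e1, e2, e3, two_mul]
  rw [hVpart, hEpart]
  split <;> ring
end

section
/- For every v ∈ S, ζ_v = n − n/m − 2ℓ_S/m² + 2Δ_v^S/m, where Δ_v^S is the degree of v in the subgraph of G induced by S. -/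
/-!
On the `E`-coordinates the vectors `x_u` have Gram matrix `n I - A`: a vertex meets `n` elements
of `E` (its `n - deg` loops and its `deg` edges), each contributing `(±1)² = 1`, while for `u ≠ w`
the only element of `E` meeting both is the edge `uw` (if any), with `x_u(e) x_w(e) = -1`.
Expanding `ζ_v = ∑_e (x_v(e) - (1/m) ∑_{u ∈ S} x_u(e))²` therefore gives
`n - (2/m)(n - Δ_v^S) + (1/m²)(m n - ∑_{u ∈ S} Δ_u^S)`, and `∑_{u ∈ S} Δ_u^S = 2 ℓ_S` by the
handshake lemma for the subgraph induced by `S`.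
-/

open Finset

theorem SimpleGraph.sum_card_filter_adj {V : Type*} [Fintype V] [DecidableEq V]
    (G : SimpleGraph V) [DecidableRel G.Adj] (S : Finset V) :
    ∑ u ∈ S, #{w ∈ S | G.Adj u w} = 2 * #{p ∈ G.edgeFinset | ∀ a ∈ p, a ∈ S} := by
  have hmem : ∀ d : G.Dart, (∀ a ∈ d.edge, a ∈ S) ↔ d.fst ∈ S ∧ d.snd ∈ S :=
    fun _ => Sym2.forall_mem_pair
  have hpairs : ∑ u ∈ S, #{w ∈ S | G.Adj u w} = #{d : G.Dart | ∀ a ∈ d.edge, a ∈ S} := by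
    rw [card_eq_sum_card_fiberwise (f := fun d : G.Dart => d.fst) (t := S)
      fun d hd => ((hmem d).1 (mem_filter.1 hd).2).1]
    refine sum_congr rfl fun u hu => card_bij' (fun w hw => ⟨(u, w), (mem_filter.1 hw).2⟩)
      (fun d _ => d.snd) ?_ ?_ (fun _ _ => rfl) (fun d hd => ?_)
    · intro w hw
      simp only [mem_filter, mem_univ, true_and, and_true, hmem] at hw ⊢
      exact ⟨hu, hw.1⟩
    · intro d hd
      simp only [mem_filter, mem_univ, true_and, hmem] at hd ⊢
      exact ⟨hd.1.2, hd.2 ▸ d.adj⟩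
    · simp only [mem_filter, mem_univ, true_and] at hd
      exact SimpleGraph.Dart.ext _ _ (Prod.ext hd.2.symm rfl)
  have hfibers : #{d : G.Dart | ∀ a ∈ d.edge, a ∈ S}
      = ∑ p ∈ G.edgeFinset with ∀ a ∈ p, a ∈ S, #{d : G.Dart | d.edge = p} := by
    rw [card_eq_sum_card_fiberwise (f := SimpleGraph.Dart.edge)
      (t := {p ∈ G.edgeFinset | ∀ a ∈ p, a ∈ S})
      fun d hd => mem_filter.2 ⟨G.mem_edgeFinset.2 d.edge_mem, (mem_filter.1 hd).2⟩]
    refine sum_congr rfl fun p hp => ?_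
    rw [filter_filter]
    refine congrArg card (filter_congr fun d _ => ?_)
    rw [mem_filter] at hp
    constructor
    · exact And.right
    · intro hd
      exact ⟨hd ▸ hp.2, hd⟩
  rw [hpairs, hfibers, sum_congr rfl fun p hp => G.dart_edge_fiber_card p
    (G.mem_edgeFinset.1 (mem_filter.1 hp).1), sum_const, smul_eq_mul, mul_comm]

theorem Sym2.ne_of_mk_eq_mk {V : Type*} {a b u w : V} (h : s(a, b) = s(u, w)) (huw : u ≠ w) :
    a ≠ b :=
  fun hab => huw (Sym2.mk_isDiag_iff.1 (h ▸ Sym2.mk_isDiag_iff.2 hab))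

theorem sum_sub_mul_sum_sq {ι κ R : Type*} [Fintype κ] [CommRing R] (a : ι → κ → R)
    (S : Finset ι) (t : R) (v : ι) :
    ∑ k, (a v k - t * ∑ u ∈ S, a u k) ^ 2
      = ∑ k, a v k ^ 2 - 2 * t * ∑ w ∈ S, ∑ k, a v k * a w k
        + t ^ 2 * ∑ u ∈ S, ∑ w ∈ S, ∑ k, a u k * a w k := by
  have hcross : ∑ w ∈ S, ∑ k, a v k * a w k = ∑ k, a v k * ∑ w ∈ S, a w k := by
    rw [sum_comm]
    simp_rw [mul_sum]
  have hsquare : ∑ u ∈ S, ∑ w ∈ S, ∑ k, a u k * a w k = ∑ k, (∑ u ∈ S, a u k) ^ 2 := by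
    simp_rw [sq, sum_mul_sum]
    rw [sum_comm (s := (univ : Finset κ))]
    exact sum_congr rfl fun u _ => sum_comm
  rw [hcross, hsquare, mul_sum, mul_sum, ← sum_sub_distrib, ← sum_add_distrib]
  refine sum_congr rfl fun k _ => ?_
  ring

-- Testing `head e = v` first makes every loop incoming, as in the paper.
def incidence {V E : Type*} [DecidableEq V] (tail head : E → V) (v : V) (e : E) : ℝ :=
  if head e = v then -1 else if tail e = v then 1 else 0

section Incidence
variable {V E : Type*} [DecidableEq V] (tail head : E → V)

theorem incidence_sq (v : V) (e : E) :
    incidence tail head v e ^ 2 = if v ∈ s(tail e, head e) then 1 else 0 := by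
  unfold incidence
  simp only [Sym2.mem_iff]
  split_ifs <;> grind

theorem incidence_mul_incidence {u w : V} (huw : u ≠ w) (e : E) :
    incidence tail head u e * incidence tail head w e
      = -if s(tail e, head e) = s(u, w) then 1 else 0 := by
  unfold incidence
  simp only [Sym2.eq_iff]
  split_ifs <;> simp_all

end Incidence

structure IsEdgeOrientation {V E : Type*} (G : SimpleGraph V) (tail head : E → V) : Prop where
  adj : ∀ e : E, tail e ≠ head e → G.Adj (tail e) (head e)
  inj : ∀ e₁ e₂ : E, tail e₁ ≠ head e₁ → tail e₂ ≠ head e₂ →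
    (s(tail e₁, head e₁) : Sym2 V) = s(tail e₂, head e₂) → e₁ = e₂
  surj : ∀ u v : V, G.Adj u v → ∃ e : E, (s(tail e, head e) : Sym2 V) = s(u, v)

namespace IsEdgeOrientation

variable {V E : Type*} [Fintype V] [DecidableEq V] [Fintype E]
  {G : SimpleGraph V} [DecidableRel G.Adj] {tail head : E → V}
  (h : IsEdgeOrientation G tail head)
  (hloops : ∀ v : V, #{e | tail e = v ∧ head e = v} = Fintype.card V - G.degree v)
include h

theorem card_filter_nonloop (P : Sym2 V → Prop) [DecidablePred P] :
    #{e | tail e ≠ head e ∧ P s(tail e, head e)} = #{p ∈ G.edgeFinset | P p} := by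
  refine card_bij (fun e _ => s(tail e, head e)) ?_ ?_ ?_
  · intro e he
    simp only [mem_filter, mem_univ, true_and, SimpleGraph.mem_edgeFinset,
      SimpleGraph.mem_edgeSet] at he ⊢
    exact ⟨h.adj e he.1, he.2⟩
  · intro e₁ he₁ e₂ he₂
    exact h.inj e₁ e₂ (mem_filter.1 he₁).2.1 (mem_filter.1 he₂).2.1
  · intro p hp
    induction p using Sym2.ind with
    | _ u w =>
      simp only [mem_filter, SimpleGraph.mem_edgeFinset, SimpleGraph.mem_edgeSet] at hp
      obtain ⟨e, he⟩ := h.surj u w hp.1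
      refine ⟨e, ?_, he⟩
      simp only [mem_filter, mem_univ, true_and, he, hp.2, and_true]
      exact Sym2.ne_of_mk_eq_mk he hp.1.ne

theorem card_filter_nonloop_mem_eq_degree (v : V) :
    #{e | tail e ≠ head e ∧ v ∈ s(tail e, head e)} = G.degree v := by
  rw [h.card_filter_nonloop (v ∈ ·), ← SimpleGraph.incidenceFinset_eq_filter,
    SimpleGraph.card_incidenceFinset_eq_degree]

theorem card_filter_mk_eq {u w : V} (huw : u ≠ w) :
    #{e | s(tail e, head e) = s(u, w)} = if G.Adj u w then 1 else 0 := by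
  have hnonloop : ∀ e ∈ (univ : Finset E),
      s(tail e, head e) = s(u, w) ↔ tail e ≠ head e ∧ s(tail e, head e) = s(u, w) :=
    fun e _ => ⟨fun he => ⟨Sym2.ne_of_mk_eq_mk he huw, he⟩, And.right⟩
  rw [filter_congr hnonloop, h.card_filter_nonloop (· = s(u, w)), filter_eq']
  split_ifs with hmem hadj hadj <;> simp_all

include hloops in
theorem sum_incidence_sq (v : V) :
    ∑ e, incidence tail head v e ^ 2 = Fintype.card V := by
  have hsplit := card_filter_add_card_filter_not (s := {e | v ∈ s(tail e, head e)})
    fun e => tail e = head e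
  rw [filter_filter, filter_filter] at hsplit
  have hloop_part : univ.filter (fun e : E => v ∈ s(tail e, head e) ∧ tail e = head e)
      = univ.filter (fun e : E => tail e = v ∧ head e = v) :=
    filter_congr fun e _ => by rw [Sym2.mem_iff]; grind
  have hnonloop_part : univ.filter (fun e : E => v ∈ s(tail e, head e) ∧ ¬tail e = head e)
      = univ.filter (fun e : E => tail e ≠ head e ∧ v ∈ s(tail e, head e)) :=
    filter_congr fun e _ => and_comm
  simp_rw [incidence_sq, sum_boole, ← hsplit, hloop_part, hnonloop_part, hloops,
    h.card_filter_nonloop_mem_eq_degree, Nat.sub_add_cancel (G.degree_lt_card_verts v).le]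

theorem sum_incidence_mul_incidence {u w : V} (huw : u ≠ w) :
    ∑ e, incidence tail head u e * incidence tail head w e = -if G.Adj u w then 1 else 0 := by
  simp_rw [incidence_mul_incidence tail head huw, sum_neg_distrib, sum_boole,
    h.card_filter_mk_eq huw]
  split_ifs <;> simp

include hloops in
theorem sum_sum_incidence_mul_incidence {S : Finset V} {v : V} (hv : v ∈ S) :
    ∑ w ∈ S, ∑ e, incidence tail head v e * incidence tail head w e
      = Fintype.card V - #{w ∈ S | G.Adj v w} := by
  have hirrefl : v ∉ ({w ∈ S | G.Adj v w} : Finset V) := fun hmem =>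
    G.irrefl (mem_filter.1 hmem).2
  rw [← add_sum_erase S _ hv, sum_congr rfl fun w hw =>
      h.sum_incidence_mul_incidence (ne_of_mem_erase hw).symm,
    sum_neg_distrib, sum_boole, filter_erase, erase_eq_of_notMem hirrefl]
  simp_rw [← sq, h.sum_incidence_sq hloops]
  ring

end IsEdgeOrientation

theorem zeta_formula_general
    {V E : Type*} [Fintype V] [DecidableEq V] [Fintype E]
    (G : SimpleGraph V) [DecidableRel G.Adj]
    (tail head : E → V)
    (hadj : ∀ e : E, tail e ≠ head e → G.Adj (tail e) (head e))
    (hinj : ∀ e₁ e₂ : E, tail e₁ ≠ head e₁ → tail e₂ ≠ head e₂ →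
      (s(tail e₁, head e₁) : Sym2 V) = s(tail e₂, head e₂) → e₁ = e₂)
    (hsurj : ∀ u v : V, G.Adj u v → ∃ e : E, (s(tail e, head e) : Sym2 V) = s(u, v))
    (hloops : ∀ v : V, (Finset.univ.filter fun e : E => tail e = v ∧ head e = v).card
        = Fintype.card V - G.degree v)
    (x : V → EuclideanSpace ℝ (E ⊕ V))
    (hxE : ∀ (v : V) (e : E),
      x v (Sum.inl e) = if head e = v then -1 else if tail e = v then 1 else 0)
    (S : Finset V) (m : ℕ) (hS : S.card = m)
    (c : EuclideanSpace ℝ (E ⊕ V)) (hc : c = (m : ℝ)⁻¹ • ∑ v ∈ S, x v)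
    (z : V → EuclideanSpace ℝ (E ⊕ V)) (hz : ∀ v : V, z v = x v - c)
    (ζ : V → ℝ) (hζ : ∀ v : V, ζ v = ∑ e : E, (z v (Sum.inl e)) ^ 2)
    (ℓ : ℕ) (hℓ : ℓ = (G.edgeFinset.filter fun p => ∀ a ∈ p, a ∈ S).card)
    (Δ : V → ℕ) (hΔ : ∀ v : V, Δ v = (S.filter fun u => G.Adj v u).card) :
    ∀ v ∈ S, ζ v = (Fintype.card V : ℝ) - (Fintype.card V : ℝ) / m
      - 2 * (ℓ : ℝ) / (m : ℝ) ^ 2 + 2 * (Δ v : ℝ) / m := by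
  intro v hv
  have horient : IsEdgeOrientation G tail head := ⟨hadj, hinj, hsurj⟩
  have hm0 : (m : ℝ) ≠ 0 := by
    rw [← hS]
    exact_mod_cast (card_pos.2 ⟨v, hv⟩).ne'
  have hcoord : ∀ e, z v (Sum.inl e)
      = incidence tail head v e - (m : ℝ)⁻¹ * ∑ u ∈ S, incidence tail head u e := by
    intro e
    simp [hz, hc, hxE, incidence]
  have hhandshake : ∑ u ∈ S, (Δ u : ℝ) = 2 * ℓ := by
    simp_rw [hΔ, hℓ]
    exact_mod_cast G.sum_card_filter_adj S
  rw [hζ, sum_congr rfl fun e _ => by rw [hcoord e], sum_sub_mul_sum_sq,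
    horient.sum_incidence_sq hloops, horient.sum_sum_incidence_mul_incidence hloops hv,
    sum_congr rfl fun u hu => horient.sum_sum_incidence_mul_incidence hloops hu]
  simp_rw [← hΔ]
  rw [sum_sub_distrib, sum_const, hS, hhandshake]
  field_simp
  ring

/-- For every `v ∈ S`,
`ζ_v = n − n/m − 2ℓ_S/m² + 2Δ_v^S/m`, where `Δ_v^S` is the degree of `v` in the
subgraph of `G` induced by `S`. -/
theorem zeta_formula
    {V E : Type*} [Fintype V] [DecidableEq V] [Fintype E] [DecidableEq E]
    (G : SimpleGraph V) [DecidableRel G.Adj]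
    (tail head : E → V)
    (hadj : ∀ e : E, tail e ≠ head e → G.Adj (tail e) (head e))
    (hinj : ∀ e₁ e₂ : E, tail e₁ ≠ head e₁ → tail e₂ ≠ head e₂ →
      (s(tail e₁, head e₁) : Sym2 V) = s(tail e₂, head e₂) → e₁ = e₂)
    (hsurj : ∀ u v : V, G.Adj u v → ∃ e : E, (s(tail e, head e) : Sym2 V) = s(u, v))
    (hloops : ∀ v : V, (Finset.univ.filter fun e : E => tail e = v ∧ head e = v).card
        = Fintype.card V - G.degree v)
    (M : ℝ) (hM : 0 < M)
    (x : V → EuclideanSpace ℝ (E ⊕ V))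
    (hxE : ∀ (v : V) (e : E),
      x v (Sum.inl e) = if head e = v then -1 else if tail e = v then 1 else 0)
    (hxV : ∀ v u : V, x v (Sum.inr u) = if u = v then M else 0)
    (S : Finset V) (m : ℕ) (hS : S.card = m)
    (c : EuclideanSpace ℝ (E ⊕ V)) (hc : c = (m : ℝ)⁻¹ • ∑ v ∈ S, x v)
    (hm : 1 ≤ m)
    (z : V → EuclideanSpace ℝ (E ⊕ V)) (hz : ∀ v : V, z v = x v - c)
    (ζ : V → ℝ) (hζ : ∀ v : V, ζ v = ∑ e : E, (z v (Sum.inl e)) ^ 2)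
    (ℓ : ℕ) (hℓ : ℓ = (G.edgeFinset.filter fun p => ∀ a ∈ p, a ∈ S).card)
    (Δ : V → ℕ) (hΔ : ∀ v : V, Δ v = (S.filter fun u => G.Adj v u).card) :
    ∀ v ∈ S, ζ v = (Fintype.card V : ℝ) - (Fintype.card V : ℝ) / m
      - 2 * (ℓ : ℝ) / (m : ℝ) ^ 2 + 2 * (Δ v : ℝ) / m :=
  zeta_formula_general G tail head hadj hinj hsurj hloops x hxE S m hS c hc z hz ζ hζ ℓ hℓ Δ hΔ
end

section
/- The sum over v ∈ S of ζ_v equals n·(m − 1) + 2ℓ_S/m. -/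
open Finset

/-!
Write `a v e` for the coordinate `x_v(e)`, `e ∈ E`. For each `e`, the variance identity
`∑_{v ∈ S} (a v e - mean)² = ∑_{v ∈ S} (a v e)² - (∑_{v ∈ S} a v e)² / m`
reduces the claim to two counts. Every vertex meets exactly `n` elements of `E`, so
`∑_e ∑_{v ∈ S} (a v e)² = m n`. Since loops are incoming,
`∑_{v ∈ S} a v e = [tail e ∈ S, e not a loop] - [head e ∈ S]`, whose square is
`∑_{v ∈ S} (a v e)²` minus twice the indicator of `e` being an edge of `G` inside `S`;
summing over `e` gives `m n - 2 ℓ`.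
-/

theorem Finset.sum_sq_sub_mean {ι : Type*} (s : Finset ι) (f : ι → ℝ) :
    ∑ i ∈ s, (f i - (#s : ℝ)⁻¹ * ∑ j ∈ s, f j) ^ 2
      = ∑ i ∈ s, f i ^ 2 - (#s : ℝ)⁻¹ * (∑ i ∈ s, f i) ^ 2 := by
  rcases s.eq_empty_or_nonempty with rfl | hs
  · simp
  have hs : (#s : ℝ) ≠ 0 := by simpa using hs.ne_empty
  simp only [sub_sq, sum_add_distrib, sum_sub_distrib, sum_const, nsmul_eq_mul, ← sum_mul,
    ← mul_sum, mul_pow]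
  field_simp
  ring

section

variable {V E : Type*}

/-- The non-loop elements of `E`, read as `s(tail e, head e)`, are exactly the edges of `G`, each
once; all other elements of `E` are loops. -/
structure SimpleGraph.IsOrientation (G : SimpleGraph V) (tail head : E → V) : Prop where
  adj : ∀ e, tail e ≠ head e → G.Adj (tail e) (head e)
  inj : ∀ e₁ e₂, tail e₁ ≠ head e₁ → tail e₂ ≠ head e₂ →
    s(tail e₁, head e₁) = s(tail e₂, head e₂) → e₁ = e₂
  surj : ∀ u v, G.Adj u v → ∃ e, s(tail e, head e) = s(u, v)

namespace SimpleGraph.IsOrientation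

variable [Fintype V] [Fintype E] [DecidableEq V] {G : SimpleGraph V} [DecidableRel G.Adj]
  {tail head : E → V}

theorem card_filter_nonloop (h : G.IsOrientation tail head) (P : Sym2 V → Prop)
    [DecidablePred P] :
    #{e | tail e ≠ head e ∧ P s(tail e, head e)} = #{p ∈ G.edgeFinset | P p} := by
  refine card_bij (fun e _ => s(tail e, head e)) ?_ ?_ ?_
  · intro e he
    simp only [mem_filter, mem_univ, true_and] at he
    simpa [he.2] using h.adj e he.1
  · intro e₁ he₁ e₂ he₂
    simp only [mem_filter, mem_univ, true_and] at he₁ he₂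
    exact h.inj e₁ e₂ he₁.1 he₂.1
  · rintro ⟨u, w⟩ hp
    simp only [mem_filter, mem_edgeFinset, mem_edgeSet] at hp
    obtain ⟨e, he⟩ := h.surj u w hp.1
    have hloop : tail e ≠ head e := by
      rw [Ne, ← Sym2.mk_isDiag_iff, he]
      exact G.not_isDiag_of_mem_edgeSet hp.1
    exact ⟨e, by simp [hloop, he, hp.2], he⟩

theorem card_filter_nonloop_mem (h : G.IsOrientation tail head) (v : V) :
    #{e | tail e ≠ head e ∧ v ∈ s(tail e, head e)} = G.degree v := by
  rw [h.card_filter_nonloop (v ∈ ·), ← incidenceFinset_eq_filter,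
    card_incidenceFinset_eq_degree]

theorem card_filter_nonloop_subset (h : G.IsOrientation tail head) (S : Finset V) :
    #{e | tail e ≠ head e ∧ tail e ∈ S ∧ head e ∈ S}
      = #{p ∈ G.edgeFinset | ∀ a ∈ p, a ∈ S} := by
  rw [← h.card_filter_nonloop]
  simp

theorem card_filter_mem (h : G.IsOrientation tail head)
    (hloops : ∀ v, #{e | tail e = v ∧ head e = v} = Fintype.card V - G.degree v) (v : V) :
    #{e | v ∈ s(tail e, head e)} = Fintype.card V := by
  rw [← card_filter_add_card_filter_not (p := fun e => tail e = head e), filter_filter,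
    filter_filter]
  have hloop :
      #{e | v ∈ s(tail e, head e) ∧ tail e = head e} = #{e | tail e = v ∧ head e = v} := by
    congr 1; ext e; simp only [mem_filter, mem_univ, true_and, Sym2.mem_iff]; grind
  have hnonloop : #{e | v ∈ s(tail e, head e) ∧ ¬ tail e = head e} = G.degree v := by
    rw [← h.card_filter_nonloop_mem]
    congr 1; ext e; simp only [mem_filter, mem_univ, true_and]; tauto
  rw [hloop, hnonloop, hloops, Nat.sub_add_cancel (G.degree_lt_card_verts v).le]

end SimpleGraph.IsOrientation

variable [DecidableEq V] (tail head : E → V)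

/-- The `E`-coordinates of the paper's `x_v`: loops count as incoming. -/
def signedIncidence (v : V) (e : E) : ℝ :=
  if head e = v then -1 else if tail e = v then 1 else 0

theorem signedIncidence_sq (v : V) (e : E) :
    signedIncidence tail head v e ^ 2 = if v ∈ s(tail e, head e) then 1 else 0 := by
  unfold signedIncidence
  split_ifs <;> simp_all [eq_comm]

theorem sum_signedIncidence_sq [Fintype E] (v : V) :
    ∑ e, signedIncidence tail head v e ^ 2 = #{e | v ∈ s(tail e, head e)} := by
  simp [signedIncidence_sq, sum_boole]

theorem signedIncidence_eq_sub (v : V) (e : E) :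
    signedIncidence tail head v e
      = (if tail e ≠ head e then if tail e = v then 1 else 0 else 0)
        - if head e = v then 1 else 0 := by
  unfold signedIncidence
  split_ifs <;> simp_all

theorem signedIncidence_sq_eq_add (v : V) (e : E) :
    signedIncidence tail head v e ^ 2
      = (if tail e ≠ head e then if tail e = v then 1 else 0 else 0)
        + if head e = v then 1 else 0 := by
  unfold signedIncidence
  split_ifs <;> simp_all

variable (S : Finset V) (e : E)

theorem sum_finset_signedIncidence :
    ∑ v ∈ S, signedIncidence tail head v e
      = (if tail e ≠ head e ∧ tail e ∈ S then 1 else 0) - if head e ∈ S then 1 else 0 := by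
  simp [signedIncidence_eq_sub, sum_sub_distrib, sum_ite_eq, ite_and]

theorem sum_finset_signedIncidence_sq :
    ∑ v ∈ S, signedIncidence tail head v e ^ 2
      = (if tail e ≠ head e ∧ tail e ∈ S then 1 else 0) + if head e ∈ S then 1 else 0 := by
  simp [signedIncidence_sq_eq_add, sum_add_distrib, sum_ite_eq, ite_and]

theorem sq_sum_signedIncidence :
    (∑ v ∈ S, signedIncidence tail head v e) ^ 2
      = ∑ v ∈ S, signedIncidence tail head v e ^ 2
        - 2 * if tail e ≠ head e ∧ tail e ∈ S ∧ head e ∈ S then 1 else 0 := by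
  rw [sum_finset_signedIncidence, sum_finset_signedIncidence_sq]
  split_ifs <;> grind

end

theorem sum_zeta_general
    {V E : Type*} [Fintype V] [DecidableEq V] [Fintype E]
    (G : SimpleGraph V) [DecidableRel G.Adj]
    (tail head : E → V)
    (hadj : ∀ e : E, tail e ≠ head e → G.Adj (tail e) (head e))
    (hinj : ∀ e₁ e₂ : E, tail e₁ ≠ head e₁ → tail e₂ ≠ head e₂ →
      (s(tail e₁, head e₁) : Sym2 V) = s(tail e₂, head e₂) → e₁ = e₂)
    (hsurj : ∀ u v : V, G.Adj u v → ∃ e : E, (s(tail e, head e) : Sym2 V) = s(u, v))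
    (hloops : ∀ v : V, (Finset.univ.filter fun e : E => tail e = v ∧ head e = v).card
        = Fintype.card V - G.degree v)
    (x : V → EuclideanSpace ℝ (E ⊕ V))
    (hxE : ∀ (v : V) (e : E),
      x v (Sum.inl e) = if head e = v then -1 else if tail e = v then 1 else 0)
    (S : Finset V) (m : ℕ) (hS : S.card = m)
    (c : EuclideanSpace ℝ (E ⊕ V)) (hc : c = (m : ℝ)⁻¹ • ∑ v ∈ S, x v)
    (hm : 1 ≤ m)
    (z : V → EuclideanSpace ℝ (E ⊕ V)) (hz : ∀ v : V, z v = x v - c)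
    (ζ : V → ℝ) (hζ : ∀ v : V, ζ v = ∑ e : E, (z v (Sum.inl e)) ^ 2)
    (ℓ : ℕ) (hℓ : ℓ = (G.edgeFinset.filter fun p => ∀ a ∈ p, a ∈ S).card)
 :
    ∑ v ∈ S, ζ v = (Fintype.card V : ℝ) * ((m : ℝ) - 1) + 2 * (ℓ : ℝ) / m := by
  subst hS
  set a := signedIncidence tail head
  have hG : G.IsOrientation tail head := ⟨hadj, hinj, hsurj⟩
  have hzE (v : V) (e : E) : z v (Sum.inl e) = a v e - (#S : ℝ)⁻¹ * ∑ u ∈ S, a u e := by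
    simp [a, signedIncidence, hz, hc, hxE, WithLp.ofLp_sum]
  have hsq : ∑ e, ∑ v ∈ S, a v e ^ 2 = #S * Fintype.card V := by
    rw [sum_comm]
    simp only [a, sum_signedIncidence_sq, hG.card_filter_mem hloops, sum_const, nsmul_eq_mul]
  have hℓ' :
      ∑ e, (if tail e ≠ head e ∧ tail e ∈ S ∧ head e ∈ S then 1 else 0 : ℝ) = ℓ := by
    rw [sum_boole, hG.card_filter_nonloop_subset, hℓ]
  have hS : (#S : ℝ) ≠ 0 := Nat.cast_ne_zero.mpr (by omega)
  calc ∑ v ∈ S, ζ v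
      = ∑ e, ∑ v ∈ S, (a v e - (#S : ℝ)⁻¹ * ∑ u ∈ S, a u e) ^ 2 := by
        simp only [hζ, hzE]; exact sum_comm
    _ = ∑ e, (∑ v ∈ S, a v e ^ 2 - (#S : ℝ)⁻¹ * (∑ v ∈ S, a v e ^ 2
          - 2 * if tail e ≠ head e ∧ tail e ∈ S ∧ head e ∈ S then 1 else 0)) := by
        simp only [sum_sq_sub_mean, a, sq_sum_signedIncidence]
    _ = _ := by
        rw [sum_sub_distrib, ← mul_sum, sum_sub_distrib, ← mul_sum, hsq, hℓ']
        field_simp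
        ring

/-- The sum over `v ∈ S` of `ζ_v` equals `n·(m − 1) + 2ℓ_S/m`. -/
theorem sum_zeta
    {V E : Type*} [Fintype V] [DecidableEq V] [Fintype E] [DecidableEq E]
    (G : SimpleGraph V) [DecidableRel G.Adj]
    (tail head : E → V)
    (hadj : ∀ e : E, tail e ≠ head e → G.Adj (tail e) (head e))
    (hinj : ∀ e₁ e₂ : E, tail e₁ ≠ head e₁ → tail e₂ ≠ head e₂ →
      (s(tail e₁, head e₁) : Sym2 V) = s(tail e₂, head e₂) → e₁ = e₂)
    (hsurj : ∀ u v : V, G.Adj u v → ∃ e : E, (s(tail e, head e) : Sym2 V) = s(u, v))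
    (hloops : ∀ v : V, (Finset.univ.filter fun e : E => tail e = v ∧ head e = v).card
        = Fintype.card V - G.degree v)
    (M : ℝ) (hM : 0 < M)
    (x : V → EuclideanSpace ℝ (E ⊕ V))
    (hxE : ∀ (v : V) (e : E),
      x v (Sum.inl e) = if head e = v then -1 else if tail e = v then 1 else 0)
    (hxV : ∀ v u : V, x v (Sum.inr u) = if u = v then M else 0)
    (S : Finset V) (m : ℕ) (hS : S.card = m)
    (c : EuclideanSpace ℝ (E ⊕ V)) (hc : c = (m : ℝ)⁻¹ • ∑ v ∈ S, x v)
    (hm : 1 ≤ m)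
    (z : V → EuclideanSpace ℝ (E ⊕ V)) (hz : ∀ v : V, z v = x v - c)
    (ζ : V → ℝ) (hζ : ∀ v : V, ζ v = ∑ e : E, (z v (Sum.inl e)) ^ 2)
    (ℓ : ℕ) (hℓ : ℓ = (G.edgeFinset.filter fun p => ∀ a ∈ p, a ∈ S).card)
 :
    ∑ v ∈ S, ζ v = (Fintype.card V : ℝ) * ((m : ℝ) - 1) + 2 * (ℓ : ℝ) / m :=
  sum_zeta_general G tail head hadj hinj hsurj hloops x hxE S m hS c hc hm z hz ζ hζ ℓ hℓ
end

section
/- The geometric median of the set Y_S coincides with its mean: for every x in the ambient Euclidean space, Σ_{v∈S} ‖c(Y_S) − y_v‖ ≤ Σ_{v∈S} ‖x − y_v‖. -/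
open Finset
open scoped InnerProductSpace

/-- The geometric median of the set `Y_S` coincides with its mean:
for every `x` in the ambient Euclidean space,
`Σ_{v∈S} ‖c(Y_S) − y_v‖ ≤ Σ_{v∈S} ‖x − y_v‖`. -/
theorem median_of_simplex_is_mean
    {V : Type*} [Fintype V] [DecidableEq V]
    (M : ℝ) (hM : 0 < M)
    (y : V → EuclideanSpace ℝ V)
    (hy : ∀ v u : V, y v u = if u = v then M else 0)
    (S : Finset V) (m : ℕ) (hm : 2 ≤ m) (hS : S.card = m)
    (c : EuclideanSpace ℝ V) (hc : c = (m : ℝ)⁻¹ • ∑ v ∈ S, y v)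
    (x : EuclideanSpace ℝ V) :
    ∑ v ∈ S, ‖c - y v‖ ≤ ∑ v ∈ S, ‖x - y v‖ := by
  have hm2 : (2:ℝ) ≤ (m:ℝ) := by exact_mod_cast hm
  have hm0 : (m:ℝ) ≠ 0 := by linarith
  have hmpos : (0:ℝ) < m := by linarith
  -- inner products of the y's
  have hinner : ∀ u w : V, ⟪y u, y w⟫_ℝ = if u = w then M^2 else 0 := by
    intro u w
    rw [PiLp.inner_apply]
    simp only [hy, RCLike.inner_apply, starRingEnd_apply, star_trivial]
    by_cases h : u = w
    · subst h
      simp [Finset.sum_ite_eq', sq]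
    · rw [if_neg h]
      apply Finset.sum_eq_zero
      intro i _
      by_cases hi : i = u
      · subst hi; simp [h]
      · simp [hi]
  have hyc : ∀ v ∈ S, ⟪y v, c⟫_ℝ = M^2 / m := by
    intro v hv
    rw [hc, inner_smul_right, inner_sum]
    simp only [hinner]
    rw [Finset.sum_ite_eq S v (fun _ => M^2), if_pos hv]
    ring
  have hcc : ⟪c, c⟫_ℝ = M^2 / m := by
    rw [hc, inner_smul_right, real_inner_smul_left, sum_inner]
    have : ∑ u ∈ S, ⟪y u, ∑ w ∈ S, y w⟫_ℝ = (m : ℝ) * M^2 := by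
      have h1 : ∀ u ∈ S, ⟪y u, ∑ w ∈ S, y w⟫_ℝ = M^2 := by
        intro u hu
        rw [inner_sum]
        simp only [hinner]
        rw [Finset.sum_ite_eq S u (fun _ => M^2), if_pos hu]
      rw [Finset.sum_congr rfl h1, Finset.sum_const, hS, nsmul_eq_mul]
    rw [this]
    field_simp
  -- all distances to the centroid are equal
  set r2 : ℝ := M^2 * ((m:ℝ) - 1) / m with hr2def
  have hr2pos : 0 < r2 := by
    apply div_pos
    · apply mul_pos (pow_pos hM 2); linarith
    · exact hmpos
  have hnsq : ∀ v ∈ S, ‖y v - c‖^2 = r2 := by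
    intro v hv
    have h3 : ⟪c, y v⟫_ℝ = M ^ 2 / m := by rw [real_inner_comm]; exact hyc v hv
    rw [← real_inner_self_eq_norm_sq, inner_sub_sub_self, hinner, if_pos rfl, h3, hcc]
    try rw [hyc v hv]
    rw [hr2def]
    field_simp
    ring
  set r : ℝ := Real.sqrt r2 with hrdef
  have hrpos : 0 < r := Real.sqrt_pos.mpr hr2pos
  have hnorm : ∀ v ∈ S, ‖y v - c‖ = r := by
    intro v hv
    rw [hrdef, ← hnsq v hv, Real.sqrt_sq (norm_nonneg _)]
  have hrr : r * r = r2 := Real.mul_self_sqrt hr2pos.le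
  -- the sum of deviations from the centroid vanishes
  have hsum0 : ∑ v ∈ S, (y v - c) = 0 := by
    rw [Finset.sum_sub_distrib, Finset.sum_const, hS, hc,
      ← Nat.cast_smul_eq_nsmul ℝ m, smul_smul, mul_inv_cancel₀ hm0, one_smul, sub_self]
  -- key identity
  have hkey : ∑ v ∈ S, ⟪y v - c, y v - x⟫_ℝ = (m:ℝ) * r2 := by
    have h1 : ∀ v ∈ S, ⟪y v - c, y v - x⟫_ℝ
        = ⟪y v - c, y v - c⟫_ℝ + ⟪y v - c, c - x⟫_ℝ := by
      intro v hv
      rw [← inner_add_right]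
      congr 1
      abel
    rw [Finset.sum_congr rfl h1, Finset.sum_add_distrib, ← sum_inner, hsum0,
      inner_zero_left, add_zero]
    have h2 : ∀ v ∈ S, ⟪y v - c, y v - c⟫_ℝ = r2 := by
      intro v hv
      rw [real_inner_self_eq_norm_sq, hnsq v hv]
    rw [Finset.sum_congr rfl h2, Finset.sum_const, hS, nsmul_eq_mul]
  -- Cauchy–Schwarz bound
  have hcs : (m:ℝ) * r2 ≤ r * ∑ v ∈ S, ‖x - y v‖ := by
    rw [← hkey, Finset.mul_sum]
    apply Finset.sum_le_sum
    intro v hv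
    calc ⟪y v - c, y v - x⟫_ℝ ≤ ‖y v - c‖ * ‖y v - x‖ := real_inner_le_norm _ _
      _ = r * ‖x - y v‖ := by rw [hnorm v hv, norm_sub_rev]
  have hlhs : ∑ v ∈ S, ‖c - y v‖ = (m:ℝ) * r := by
    have : ∀ v ∈ S, ‖c - y v‖ = r := by
      intro v hv; rw [norm_sub_rev]; exact hnorm v hv
    rw [Finset.sum_congr rfl this, Finset.sum_const, hS, nsmul_eq_mul]
  rw [hlhs]
  nlinarith [hcs, hrr, hrpos]
end

section
/- If a vector z is orthogonal to the affine hull of Y_S (i.e., orthogonal to y_u − y_v for all u, v ∈ S), then the minimum of Σ_{v∈S} ‖(z + x) − y_v‖ over all x in the affine hull of Y_S is attained at x = c(Y_S); that is, for every x in the affine hull of Y_S, Σ_{v∈S} ‖(z + c(Y_S)) − y_v‖ ≤ Σ_{v∈S} ‖(z + x) − y_v‖. -/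
open Finset
open scoped InnerProductSpace

/-- If a vector `z` is orthogonal to the affine hull of `Y_S`
(i.e. orthogonal to `y_u − y_v` for all `u, v ∈ S`), then the minimum of
`Σ_{v∈S} ‖(z + x) − y_v‖` over `x` in the affine hull of `Y_S` is attained at
`x = c(Y_S)`. -/
theorem shifted_median_of_simplex_is_mean
    {V : Type*} [Fintype V] [DecidableEq V]
    (M : ℝ) (hM : 0 < M)
    (y : V → EuclideanSpace ℝ V)
    (hy : ∀ v u : V, y v u = if u = v then M else 0)
    (S : Finset V) (m : ℕ) (hm : 2 ≤ m) (hS : S.card = m)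
    (c : EuclideanSpace ℝ V) (hc : c = (m : ℝ)⁻¹ • ∑ v ∈ S, y v)
    (z : EuclideanSpace ℝ V)
    (hz : ∀ u ∈ S, ∀ v ∈ S, ⟪z, y u - y v⟫_ℝ = 0)
    (x : EuclideanSpace ℝ V)
    (hx : x ∈ affineSpan ℝ ((fun v => y v) '' (S : Set V))) :
    ∑ v ∈ S, ‖(z + c) - y v‖ ≤ ∑ v ∈ S, ‖(z + x) - y v‖ := by
  have hmR : (0 : ℝ) < m := by exact_mod_cast Nat.lt_of_lt_of_le (by norm_num) hm
  obtain ⟨v0, hv0⟩ : ∃ v, v ∈ S := Finset.card_pos.mp (by omega)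
  -- inner products of the basis vectors
  have hyy : ∀ u v : V, ⟪y u, y v⟫_ℝ = if u = v then M ^ 2 else 0 := by
    intro u v
    rw [PiLp.inner_apply]
    simp only [hy, RCLike.inner_apply, starRingEnd_apply, star_trivial]
    rcases eq_or_ne u v with rfl | huv
    · simp [Finset.sum_ite_eq', sq]
    · rw [if_neg huv]
      apply Finset.sum_eq_zero
      intro w _
      by_cases h1 : w = u <;> by_cases h2 : w = v <;> simp_all
  -- inner products with z are constant on S
  have hzy : ∀ v ∈ S, ⟪z, y v⟫_ℝ = ⟪z, y v0⟫_ℝ := by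
    intro v hv
    have h := hz v hv v0 hv0
    rw [inner_sub_right] at h
    linarith
  have hmc : (m : ℝ) • c = ∑ v ∈ S, y v := by
    rw [hc, smul_smul, mul_inv_cancel₀ (ne_of_gt hmR), one_smul]
  have hzc : ⟪z, c⟫_ℝ = ⟪z, y v0⟫_ℝ := by
    have : ⟪z, (m : ℝ) • c⟫_ℝ = (m : ℝ) * ⟪z, y v0⟫_ℝ := by
      rw [hmc, inner_sum, Finset.sum_congr rfl hzy, Finset.sum_const, hS,
        nsmul_eq_mul]
    rw [inner_smul_right] at this
    have := mul_left_cancel₀ (ne_of_gt hmR) this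
    exact this
  -- x is an affine combination of the vertices
  have hzx : ⟪z, x⟫_ℝ = ⟪z, y v0⟫_ℝ := by
    rw [Set.image_eq_range] at hx
    obtain ⟨t, w, hw1, hxw⟩ := eq_affineCombination_of_mem_affineSpan hx
    rw [Finset.affineCombination_eq_linear_combination _ _ _ hw1] at hxw
    rw [hxw, inner_sum]
    have : ∀ i ∈ t, ⟪z, w i • y (i : V)⟫_ℝ = w i * ⟪z, y v0⟫_ℝ := by
      intro i _
      rw [inner_smul_right, hzy _ i.2]
    rw [Finset.sum_congr rfl this, ← Finset.sum_mul, hw1, one_mul]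
  have hzxc : ⟪z, x - c⟫_ℝ = 0 := by rw [inner_sub_right, hzx, hzc, sub_self]
  -- inner products with c
  have hcy : ∀ v ∈ S, ⟪c, y v⟫_ℝ = M ^ 2 / m := by
    intro v hv
    have : ⟪(m : ℝ) • c, y v⟫_ℝ = M ^ 2 := by
      rw [hmc, sum_inner]
      rw [Finset.sum_eq_single_of_mem v hv (fun u _ huv => by rw [hyy, if_neg huv])]
      rw [hyy, if_pos rfl]
    rw [inner_smul_left, RCLike.conj_to_real] at this
    rw [eq_div_iff (ne_of_gt hmR)]
    linarith
  have hcc : ⟪c, c⟫_ℝ = M ^ 2 / m := by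
    nth_rewrite 2 [hc]
    rw [inner_smul_right, inner_sum, Finset.sum_congr rfl hcy, Finset.sum_const, hS,
      nsmul_eq_mul]
    field_simp
  -- the common distance r
  set R : ℝ := ‖z‖ ^ 2 + (M ^ 2 - M ^ 2 / m) with hR
  have hRpos : 0 < R := by
    show 0 < ‖z‖ ^ 2 + (M ^ 2 - M ^ 2 / m)
    have h1 : M ^ 2 / m < M ^ 2 := by
      rw [div_lt_iff₀ hmR]
      nth_rewrite 1 [← mul_one (M ^ 2)]
      have : (1 : ℝ) < m := by exact_mod_cast Nat.lt_of_lt_of_le (by norm_num) hm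
      exact mul_lt_mul_of_pos_left this (by positivity)
    nlinarith [sq_nonneg ‖z‖]
  set r : ℝ := Real.sqrt R with hr
  have hrpos : 0 < r := Real.sqrt_pos.mpr hRpos
  have hinner_self : ∀ v ∈ S, ⟪z + c - y v, z + c - y v⟫_ℝ = R := by
    intro v hv
    have h1 : ⟪z, y v⟫_ℝ = ⟪z, c⟫_ℝ := by rw [hzy v hv, hzc]
    have h2 : ⟪y v, z⟫_ℝ = ⟪z, y v⟫_ℝ := real_inner_comm _ _
    have h3 : ⟪c, z⟫_ℝ = ⟪z, c⟫_ℝ := real_inner_comm _ _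
    have h4 : ⟪y v, c⟫_ℝ = ⟪c, y v⟫_ℝ := real_inner_comm _ _
    have h5 : ⟪y v, y v⟫_ℝ = M ^ 2 := by rw [hyy, if_pos rfl]
    have h6 : ⟪z, z⟫_ℝ = ‖z‖ ^ 2 := real_inner_self_eq_norm_sq z
    simp only [inner_sub_left, inner_sub_right, inner_add_left, inner_add_right]
    rw [h2, h3, h4, h5, h6, hcc, hcy v hv, h1, hR]
    ring
  have key : ∀ v ∈ S, ‖z + c - y v‖ = r := by
    intro v hv
    rw [norm_eq_sqrt_real_inner, hinner_self v hv]
  -- Cauchy-Schwarz termwise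
  have hterm : ∀ v ∈ S, ⟪z + x - y v, z + c - y v⟫_ℝ ≤ ‖z + x - y v‖ * r := by
    intro v hv
    calc ⟪z + x - y v, z + c - y v⟫_ℝ ≤ ‖z + x - y v‖ * ‖z + c - y v‖ :=
          real_inner_le_norm _ _
      _ = ‖z + x - y v‖ * r := by rw [key v hv]
  -- sum of the inner products equals m * R
  have hsum : ∑ v ∈ S, ⟪z + x - y v, z + c - y v⟫_ℝ = m * R := by
    have hdecomp : ∀ v ∈ S, ⟪z + x - y v, z + c - y v⟫_ℝ
        = R + ⟪z, x - c⟫_ℝ + ⟪x - c, c - y v⟫_ℝ := by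
      intro v hv
      have : (z + x - y v : EuclideanSpace ℝ V) = (z + c - y v) + (x - c) := by abel
      rw [this, inner_add_left, hinner_self v hv]
      have : (z + c - y v : EuclideanSpace ℝ V) = z + (c - y v) := by abel
      rw [this, inner_add_right, real_inner_comm (x - c) z]
      ring
    rw [Finset.sum_congr rfl hdecomp]
    rw [Finset.sum_add_distrib, Finset.sum_const, hS]
    have h0 : ∑ v ∈ S, ⟪x - c, c - y v⟫_ℝ = 0 := by
      rw [← inner_sum]
      have : ∑ v ∈ S, (c - y v : EuclideanSpace ℝ V) = 0 := by
        rw [Finset.sum_sub_distrib, Finset.sum_const, hS, ← Nat.cast_smul_eq_nsmul ℝ m c, hmc, sub_self]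
      rw [this, inner_zero_right]
    rw [h0, hzxc, nsmul_eq_mul]
    ring
  -- combine
  have hlhs : ∑ v ∈ S, ‖(z + c) - y v‖ = m * r := by
    rw [Finset.sum_congr rfl key, Finset.sum_const, hS, nsmul_eq_mul]
  have hRr : R = r * r := (Real.mul_self_sqrt hRpos.le).symm
  have hge : (m : ℝ) * R ≤ (∑ v ∈ S, ‖(z + x) - y v‖) * r := by
    rw [← hsum, Finset.sum_mul]
    exact Finset.sum_le_sum hterm
  rw [hlhs]
  rw [hRr, show (m : ℝ) * (r * r) = ((m : ℝ) * r) * r by ring] at hge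
  exact le_of_mul_le_mul_right hge hrpos
end

section
/- If 3 ≤ m ≤ n and M ≥ 300·n, then for any two distinct u, v ∈ S, the cosine of the angle between z_u and z_v, namely ⟨z_u, z_v⟩/(‖z_u‖·‖z_v‖), lies strictly between −1.01/(m − 1) and −0.99/(m − 1). -/
/-!
Every vertex of `G'` meets exactly `n` edges, so `‖x_v‖² = M² + n`, while two distinct
`x_u, x_v` share at most one edge and have inner product `-1` or `0`. Hence, with
`a = (M² + n)/m`, all the numbers `⟪x_u, c⟫` and `‖c‖²` lie in `[a - 1, a]`, which gives
`⟪z_u, z_v⟫ = -a ± 2` and `‖z_u‖² = a(m - 1) ± 2`. Since `a ≥ 90000 n` swamps these errors,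
the cosine is `-1/(m - 1)` up to a factor `1 ± 0.01`.
-/

open Finset
open scoped InnerProductSpace

section Incidence

variable {V E : Type*} [DecidableEq V] (tail head : E → V)

/-- A loop at `v` (`tail e = head e = v`) gets sign `-1`: loops count as incoming. -/
def incidenceSign (v : V) (e : E) : ℝ :=
  if head e = v then -1 else if tail e = v then 1 else 0

lemma incidenceSign_mul_self (v : V) (e : E) :
    incidenceSign tail head v e * incidenceSign tail head v e
      = if head e = v ∨ tail e = v then 1 else 0 := by
  unfold incidenceSign
  split_ifs <;> simp_all

lemma incidenceSign_mul_of_ne {u v : V} (huv : u ≠ v) (e : E) :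
    incidenceSign tail head u e * incidenceSign tail head v e
      = if s(tail e, head e) = s(u, v) then -1 else 0 := by
  unfold incidenceSign
  simp only [Sym2.eq_iff]
  split_ifs <;> grind

variable [Fintype V] [Fintype E]

noncomputable def incidenceVector (M : ℝ) (v : V) : EuclideanSpace ℝ (E ⊕ V) :=
  WithLp.toLp 2 (Sum.elim (incidenceSign tail head v) (Pi.single v M))

lemma inner_incidenceVector (M : ℝ) (u v : V) :
    ⟪incidenceVector tail head M u, incidenceVector tail head M v⟫_ℝ
      = ∑ e, incidenceSign tail head u e * incidenceSign tail head v e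
        + ∑ w, Pi.single u M w * Pi.single v M w := by
  simp [incidenceVector, PiLp.inner_apply, Fintype.sum_sum_type, mul_comm]

lemma inner_incidenceVector_self (M : ℝ) (v : V) :
    ⟪incidenceVector tail head M v, incidenceVector tail head M v⟫_ℝ
      = #{e | head e = v ∨ tail e = v} + M ^ 2 := by
  rw [inner_incidenceVector]
  simp [incidenceSign_mul_self, sum_boole, Pi.single_apply, sq]

lemma inner_incidenceVector_of_ne (M : ℝ) {u v : V} (huv : u ≠ v) :
    ⟪incidenceVector tail head M u, incidenceVector tail head M v⟫_ℝ
      = -#{e | s(tail e, head e) = s(u, v)} := by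
  rw [inner_incidenceVector]
  simp [incidenceSign_mul_of_ne tail head huv, sum_ite, Pi.single_apply, huv.symm]

end Incidence

section Multigraph

variable {V E : Type*} [Fintype E] [DecidableEq V] {tail head : E → V}

lemma card_filter_sym2_eq_le_one
    (hinj : ∀ e₁ e₂ : E, tail e₁ ≠ head e₁ → tail e₂ ≠ head e₂ →
      (s(tail e₁, head e₁) : Sym2 V) = s(tail e₂, head e₂) → e₁ = e₂)
    {u v : V} (huv : u ≠ v) :
    #{e | s(tail e, head e) = s(u, v)} ≤ 1 := by
  have hloop : ∀ e : E, s(tail e, head e) = s(u, v) → tail e ≠ head e := fun e he => by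
    rwa [Ne, ← Sym2.mk_isDiag_iff, he, Sym2.mk_isDiag_iff]
  refine card_le_one.2 fun e₁ he₁ e₂ he₂ => ?_
  simp only [mem_filter, mem_univ, true_and] at he₁ he₂
  exact hinj e₁ e₂ (hloop e₁ he₁) (hloop e₂ he₂) (he₁.trans he₂.symm)

variable [Fintype V] (G : SimpleGraph V) [DecidableRel G.Adj]

lemma card_nonloop_incident_eq_degree
    (hadj : ∀ e : E, tail e ≠ head e → G.Adj (tail e) (head e))
    (hinj : ∀ e₁ e₂ : E, tail e₁ ≠ head e₁ → tail e₂ ≠ head e₂ →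
      (s(tail e₁, head e₁) : Sym2 V) = s(tail e₂, head e₂) → e₁ = e₂)
    (hsurj : ∀ u v : V, G.Adj u v → ∃ e : E, (s(tail e, head e) : Sym2 V) = s(u, v))
    (v : V) :
    #{e | tail e ≠ head e ∧ (head e = v ∨ tail e = v)} = G.degree v := by
  rw [← G.card_incidenceFinset_eq_degree]
  refine card_bij (fun e _ => s(tail e, head e)) ?_ ?_ ?_
  · intro e he
    simp only [mem_filter, mem_univ, true_and] at he
    simp only [SimpleGraph.mem_incidenceFinset, SimpleGraph.incidenceSet, Set.mem_sep_iff,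
      SimpleGraph.mem_edgeSet, Sym2.mem_iff]
    exact ⟨hadj e he.1, by tauto⟩
  · intro e₁ he₁ e₂ he₂ h
    simp only [mem_filter, mem_univ, true_and] at he₁ he₂
    exact hinj e₁ e₂ he₁.1 he₂.1 h
  · intro f hf
    induction f using Sym2.ind with
    | h a b =>
      simp only [SimpleGraph.mem_incidenceFinset, SimpleGraph.incidenceSet, Set.mem_sep_iff,
        SimpleGraph.mem_edgeSet, Sym2.mem_iff] at hf
      obtain ⟨e, he⟩ := hsurj a b hf.1
      have hloop : tail e ≠ head e := by
        rw [Ne, ← Sym2.mk_isDiag_iff, he, Sym2.mk_isDiag_iff]; exact hf.1.ne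
      have hv : v ∈ s(tail e, head e) := by rw [he]; simp only [Sym2.mem_iff]; exact hf.2
      rw [Sym2.mem_iff] at hv
      exact ⟨e, by simp only [mem_filter, mem_univ, true_and]; tauto, he⟩

lemma card_incident_eq_card
    (hadj : ∀ e : E, tail e ≠ head e → G.Adj (tail e) (head e))
    (hinj : ∀ e₁ e₂ : E, tail e₁ ≠ head e₁ → tail e₂ ≠ head e₂ →
      (s(tail e₁, head e₁) : Sym2 V) = s(tail e₂, head e₂) → e₁ = e₂)
    (hsurj : ∀ u v : V, G.Adj u v → ∃ e : E, (s(tail e, head e) : Sym2 V) = s(u, v))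
    (hloops : ∀ v : V, (Finset.univ.filter fun e : E => tail e = v ∧ head e = v).card
        = Fintype.card V - G.degree v)
    (v : V) :
    #{e | head e = v ∨ tail e = v} = Fintype.card V := by
  rw [← card_filter_add_card_filter_not (fun e => tail e = head e), filter_filter, filter_filter]
  have hloop_card : #{e | (head e = v ∨ tail e = v) ∧ tail e = head e}
      = #{e | tail e = v ∧ head e = v} := by
    congr 1; ext e; simp only [mem_filter, mem_univ, true_and]; grind
  have hnonloop : #{e | (head e = v ∨ tail e = v) ∧ tail e ≠ head e} = G.degree v := by
    rw [← card_nonloop_incident_eq_degree G hadj hinj hsurj v]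
    congr 1; ext e; simp only [mem_filter, mem_univ, true_and]; tauto
  rw [hloop_card, hnonloop, hloops, Nat.sub_add_cancel (G.degree_lt_card_verts v).le]

end Multigraph

section Centroid

variable {ι F : Type*} [NormedAddCommGroup F] [InnerProductSpace ℝ F] [DecidableEq ι]
  {x : ι → F} {S : Finset ι} {A : ℝ} {c : F}
  (hself : ∀ a ∈ S, ⟪x a, x a⟫_ℝ = A)
  (hcross : ∀ a ∈ S, ∀ b ∈ S, a ≠ b → ⟪x a, x b⟫_ℝ ∈ Set.Icc (-1) 0)
include hself hcross

lemma sum_inner_mem_Icc {a : ι} (ha : a ∈ S) :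
    ∑ b ∈ S, ⟪x a, x b⟫_ℝ ∈ Set.Icc (A - (#S - 1)) A := by
  have hbounds : ∀ b ∈ S.erase a, ⟪x a, x b⟫_ℝ ∈ Set.Icc (-1) 0 := fun b hb =>
    hcross a ha b (mem_of_mem_erase hb) (ne_of_mem_erase hb).symm
  have hcard : (#(S.erase a) : ℝ) = #S - 1 := by
    rw [card_erase_of_mem ha, Nat.cast_sub (card_pos.2 ⟨a, ha⟩), Nat.cast_one]
  have hlo := card_nsmul_le_sum _ _ _ fun b hb => (hbounds b hb).1
  have hhi := sum_nonpos fun b hb => (hbounds b hb).2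
  rw [nsmul_eq_mul, hcard] at hlo
  rw [← add_sum_erase S _ ha, hself a ha]
  constructor <;> linarith

variable (hc : c = (#S : ℝ)⁻¹ • ∑ b ∈ S, x b)
include hc

lemma inner_centroid_mem_Icc {a : ι} (ha : a ∈ S) :
    ⟪x a, c⟫_ℝ ∈ Set.Icc (A / #S - 1) (A / #S) := by
  have hm : (0 : ℝ) < #S := Nat.cast_pos.2 (card_pos.2 ⟨a, ha⟩)
  obtain ⟨hlo, hhi⟩ := sum_inner_mem_Icc hself hcross ha
  rw [hc, real_inner_smul_right, inner_sum, ← div_eq_inv_mul]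
  constructor
  · rw [le_div_iff₀ hm, sub_mul, div_mul_cancel₀ _ hm.ne']; linarith
  · exact div_le_div_of_nonneg_right hhi hm.le

lemma inner_centroid_self_mem_Icc (hS : S.Nonempty) :
    ⟪c, c⟫_ℝ ∈ Set.Icc (A / #S - 1) (A / #S) := by
  have hm : (0 : ℝ) < #S := Nat.cast_pos.2 (card_pos.2 hS)
  have hbounds := fun a (ha : a ∈ S) => inner_centroid_mem_Icc hself hcross hc ha
  have hlo := card_nsmul_le_sum _ _ _ fun a ha => (hbounds a ha).1
  have hhi := sum_le_card_nsmul _ _ _ fun a ha => (hbounds a ha).2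
  rw [nsmul_eq_mul] at hlo hhi
  nth_rw 1 [hc]
  rw [real_inner_smul_left, sum_inner, ← div_eq_inv_mul]
  constructor
  · rw [le_div_iff₀ hm]; linarith
  · rw [div_le_iff₀ hm]; linarith

lemma abs_inner_sub_centroid_add_le {a b : ι} (ha : a ∈ S) (hb : b ∈ S) (hab : a ≠ b) :
    |⟪x a - c, x b - c⟫_ℝ + A / #S| ≤ 2 := by
  have hxx := hcross a ha b hb hab
  have hxa := inner_centroid_mem_Icc hself hcross hc ha
  have hxb := inner_centroid_mem_Icc hself hcross hc hb
  have hcc := inner_centroid_self_mem_Icc hself hcross hc ⟨a, ha⟩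
  rw [inner_sub_left, inner_sub_right, inner_sub_right, real_inner_comm (x b) c, abs_le]
  simp only [Set.mem_Icc] at hxx hxa hxb hcc
  constructor <;> linarith

lemma abs_norm_sub_centroid_sq_sub_le {a : ι} (ha : a ∈ S) :
    |‖x a - c‖ ^ 2 - A / #S * (#S - 1)| ≤ 2 := by
  have hm : (#S : ℝ) ≠ 0 := Nat.cast_ne_zero.2 (card_pos.2 ⟨a, ha⟩).ne'
  have hxa := inner_centroid_mem_Icc hself hcross hc ha
  have hcc := inner_centroid_self_mem_Icc hself hcross hc ⟨a, ha⟩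
  have hA : A / #S * (#S - 1) = A - A / #S := by field_simp
  rw [← real_inner_self_eq_norm_sq, real_inner_sub_sub_self, hself a ha, hA, abs_le]
  simp only [Set.mem_Icc] at hxa hcc
  constructor <;> linarith

end Centroid

lemma abs_mul_sub_le_of_abs_sq_sub_le {p q B ε : ℝ} (hp : 0 ≤ p) (hq : 0 ≤ q)
    (hεB : ε ≤ B) (hpB : |p ^ 2 - B| ≤ ε) (hqB : |q ^ 2 - B| ≤ ε) : |p * q - B| ≤ ε := by
  rw [abs_le] at hpB hqB ⊢
  have hsq : (B - ε) ^ 2 ≤ (p * q) ^ 2 := by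
    rw [mul_pow, sq]
    exact mul_le_mul (by linarith) (by linarith) (by linarith) (sq_nonneg p)
  have hlo := (pow_le_pow_iff_left₀ (by linarith) (mul_nonneg hp hq) two_ne_zero).1 hsq
  constructor
  · linarith
  · nlinarith [sq_nonneg (p - q)]

lemma div_bounds_of_abs_sub_le {N D a m : ℝ} (hm : 2 ≤ m) (ha : 500 ≤ a)
    (hN : |N + a| ≤ 2) (hD : |D - a * (m - 1)| ≤ 2) :
    -1.01 / (m - 1) < N / D ∧ N / D < -0.99 / (m - 1) := by
  rw [abs_le] at hN hD
  have hm1 : 0 < m - 1 := by linarith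
  have hD0 : 0 < D := by nlinarith
  have hNm : (-a - 2) * (m - 1) ≤ N * (m - 1) := by nlinarith
  have hNm' : N * (m - 1) ≤ (-a + 2) * (m - 1) := by nlinarith
  constructor
  · rw [div_lt_div_iff₀ hm1 hD0]; nlinarith
  · rw [div_lt_div_iff₀ hD0 hm1]; nlinarith

theorem angle_between_z_bounds_general
    {V E : Type*} [Fintype V] [DecidableEq V] [Fintype E]
    (G : SimpleGraph V) [DecidableRel G.Adj]
    (tail head : E → V)
    (hadj : ∀ e : E, tail e ≠ head e → G.Adj (tail e) (head e))
    (hinj : ∀ e₁ e₂ : E, tail e₁ ≠ head e₁ → tail e₂ ≠ head e₂ →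
      (s(tail e₁, head e₁) : Sym2 V) = s(tail e₂, head e₂) → e₁ = e₂)
    (hsurj : ∀ u v : V, G.Adj u v → ∃ e : E, (s(tail e, head e) : Sym2 V) = s(u, v))
    (hloops : ∀ v : V, (Finset.univ.filter fun e : E => tail e = v ∧ head e = v).card
        = Fintype.card V - G.degree v)
    (M : ℝ)
    (x : V → EuclideanSpace ℝ (E ⊕ V))
    (hxE : ∀ (v : V) (e : E),
      x v (Sum.inl e) = if head e = v then -1 else if tail e = v then 1 else 0)
    (hxV : ∀ v u : V, x v (Sum.inr u) = if u = v then M else 0)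
    (S : Finset V) (m : ℕ) (hS : S.card = m)
    (c : EuclideanSpace ℝ (E ⊕ V)) (hc : c = (m : ℝ)⁻¹ • ∑ v ∈ S, x v)
    (hm : 3 ≤ m) (hmn : m ≤ Fintype.card V)
    (hM300 : 300 * (Fintype.card V : ℝ) ≤ M)
    (z : V → EuclideanSpace ℝ (E ⊕ V)) (hz : ∀ v : V, z v = x v - c)
 :
    ∀ u ∈ S, ∀ v ∈ S, u ≠ v →
      -1.01 / ((m : ℝ) - 1) < ⟪z u, z v⟫_ℝ / (‖z u‖ * ‖z v‖) ∧
      ⟪z u, z v⟫_ℝ / (‖z u‖ * ‖z v‖) < -0.99 / ((m : ℝ) - 1) := by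
  intro u hu v hv huv
  subst hS
  have hx : x = incidenceVector tail head M := by
    funext w
    ext (e | w') <;> simp [incidenceVector, incidenceSign, hxE, hxV, Pi.single_apply]
  subst hx
  set A : ℝ := Fintype.card V + M ^ 2
  have hself : ∀ w ∈ S, ⟪incidenceVector tail head M w, incidenceVector tail head M w⟫_ℝ = A :=
    fun w _ => by rw [inner_incidenceVector_self, card_incident_eq_card G hadj hinj hsurj hloops]
  have hcross : ∀ a ∈ S, ∀ b ∈ S, a ≠ b →
      ⟪incidenceVector tail head M a, incidenceVector tail head M b⟫_ℝ ∈ Set.Icc (-1) 0 :=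
    fun a _ b _ hab => by
      have := card_filter_sym2_eq_le_one hinj hab
      rw [inner_incidenceVector_of_ne _ _ _ hab, Set.mem_Icc, neg_le_neg_iff, neg_nonpos]
      exact ⟨by exact_mod_cast this, Nat.cast_nonneg _⟩
  have hm2 : (2 : ℝ) ≤ #S := by exact_mod_cast (by omega : 2 ≤ #S)
  have hmn' : (#S : ℝ) ≤ Fintype.card V := by exact_mod_cast hmn
  have ha : 500 ≤ A / #S := by
    rw [le_div_iff₀ (by linarith)]
    nlinarith
  rw [hz, hz]
  refine div_bounds_of_abs_sub_le hm2 ha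
    (abs_inner_sub_centroid_add_le hself hcross hc hu hv huv) ?_
  refine abs_mul_sub_le_of_abs_sq_sub_le (norm_nonneg _) (norm_nonneg _) (by nlinarith) ?_ ?_
  · exact abs_norm_sub_centroid_sq_sub_le hself hcross hc hu
  · exact abs_norm_sub_centroid_sq_sub_le hself hcross hc hv

/-- If `3 ≤ m ≤ n` and `M ≥ 300·n`, then for distinct `u, v ∈ S` the
cosine of the angle between `z_u` and `z_v` lies strictly between `−1.01/(m−1)` and
`−0.99/(m−1)`. -/
theorem angle_between_z_bounds
    {V E : Type*} [Fintype V] [DecidableEq V] [Fintype E] [DecidableEq E]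
    (G : SimpleGraph V) [DecidableRel G.Adj]
    (tail head : E → V)
    (hadj : ∀ e : E, tail e ≠ head e → G.Adj (tail e) (head e))
    (hinj : ∀ e₁ e₂ : E, tail e₁ ≠ head e₁ → tail e₂ ≠ head e₂ →
      (s(tail e₁, head e₁) : Sym2 V) = s(tail e₂, head e₂) → e₁ = e₂)
    (hsurj : ∀ u v : V, G.Adj u v → ∃ e : E, (s(tail e, head e) : Sym2 V) = s(u, v))
    (hloops : ∀ v : V, (Finset.univ.filter fun e : E => tail e = v ∧ head e = v).card
        = Fintype.card V - G.degree v)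
    (M : ℝ) (hM : 0 < M)
    (x : V → EuclideanSpace ℝ (E ⊕ V))
    (hxE : ∀ (v : V) (e : E),
      x v (Sum.inl e) = if head e = v then -1 else if tail e = v then 1 else 0)
    (hxV : ∀ v u : V, x v (Sum.inr u) = if u = v then M else 0)
    (S : Finset V) (m : ℕ) (hS : S.card = m)
    (c : EuclideanSpace ℝ (E ⊕ V)) (hc : c = (m : ℝ)⁻¹ • ∑ v ∈ S, x v)
    (hm : 3 ≤ m) (hmn : m ≤ Fintype.card V)
    (hM300 : 300 * (Fintype.card V : ℝ) ≤ M)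
    (z : V → EuclideanSpace ℝ (E ⊕ V)) (hz : ∀ v : V, z v = x v - c)
 :
    ∀ u ∈ S, ∀ v ∈ S, u ≠ v →
      -1.01 / ((m : ℝ) - 1) < ⟪z u, z v⟫_ℝ / (‖z u‖ * ‖z v‖) ∧
      ⟪z u, z v⟫_ℝ / (‖z u‖ * ‖z v‖) < -0.99 / ((m : ℝ) - 1) :=
  angle_between_z_bounds_general G tail head hadj hinj hsurj hloops M x hxE hxV S m hS c hc hm hmn
    hM300 z hz
end

section
/- For every subset S ⊆ V with |S| = m ≥ 2 and every point c ∈ ℝ^E, Σ_{v∈S} ‖x_v − c‖_∞ ≥ m/2. -/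
open Finset
open scoped InnerProductSpace

/-- For every `S ⊆ V` with `|S| = m ≥ 2` and every point `c`,
`Σ_{v∈S} ‖x_v − c‖_∞ ≥ m/2`. -/
theorem linf_median_lower_bound
    {V E : Type*} [Fintype V] [DecidableEq V] [Fintype E] [DecidableEq E]
    (G : SimpleGraph V) [DecidableRel G.Adj]
    (hiso : ∀ v : V, ∃ u : V, G.Adj v u)
    (tail head : E → V)
    (hadj : ∀ e : E, G.Adj (tail e) (head e))
    (hinj : ∀ e₁ e₂ : E,
      (s(tail e₁, head e₁) : Sym2 V) = s(tail e₂, head e₂) → e₁ = e₂)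
    (hsurj : ∀ u v : V, G.Adj u v → ∃ e : E, (s(tail e, head e) : Sym2 V) = s(u, v))
    (x : V → E → ℝ)
    (hx : ∀ (v : V) (e : E),
      x v e = if tail e = v then 1 else if head e = v then -1 else 0)
    (S : Finset V) (m : ℕ) (hm : 2 ≤ m) (hS : S.card = m) :
    ∀ c : E → ℝ, (m : ℝ) / 2 ≤ ∑ v ∈ S, ‖x v - c‖ := by
  intro c
  have key : ∀ u v : V, u ≠ v → (1:ℝ) ≤ ‖x u - x v‖ := by
    intro u v huv
    obtain ⟨w, hw⟩ := hiso u
    obtain ⟨e, he⟩ := hsurj u w hw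
    rw [Sym2.eq_iff] at he
    have hne : tail e ≠ head e := (hadj e).ne
    have h1 : (1:ℝ) ≤ |x u e - x v e| := by
      rw [hx u e, hx v e]
      rcases he with ⟨h1, h2⟩ | ⟨h1, h2⟩
      · have hvt : ¬ tail e = v := fun h => huv (h1.symm.trans h)
        rw [if_pos h1, if_neg hvt]
        by_cases hv : head e = v
        · rw [if_pos hv]; norm_num
        · rw [if_neg hv]; norm_num
      · have hut : ¬ tail e = u := fun h => hne (h.trans h2.symm)
        have hhv : ¬ head e = v := fun h => huv (h2.symm.trans h)
        rw [if_neg hut, if_pos h2]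
        by_cases hv : tail e = v
        · rw [if_pos hv]; norm_num
        · rw [if_neg hv, if_neg hhv]; norm_num
    calc (1:ℝ) ≤ |x u e - x v e| := h1
      _ = ‖(x u - x v) e‖ := by simp [Real.norm_eq_abs]
      _ ≤ ‖x u - x v‖ := norm_le_pi_norm _ e
  by_cases h : ∀ v ∈ S, (1:ℝ)/2 ≤ ‖x v - c‖
  · have hle : ∑ _v ∈ S, (1/2:ℝ) ≤ ∑ v ∈ S, ‖x v - c‖ := Finset.sum_le_sum h
    rw [Finset.sum_const, hS, nsmul_eq_mul] at hle
    linarith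
  · push_neg at h
    obtain ⟨v₀, hv₀S, hδ⟩ := h
    have hδ' : ‖x v₀ - c‖ ≤ 1/2 := le_of_lt hδ
    have hδ0 : (0:ℝ) ≤ ‖x v₀ - c‖ := norm_nonneg _
    have hrest : ∀ u ∈ S.erase v₀, (1:ℝ) - ‖x v₀ - c‖ ≤ ‖x u - c‖ := by
      intro u hu
      have hne : u ≠ v₀ := (Finset.mem_erase.mp hu).1
      have hk := key u v₀ hne
      have tri : ‖x u - x v₀‖ ≤ ‖x u - c‖ + ‖x v₀ - c‖ := by
        have := norm_sub_le (x u - c) (x v₀ - c)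
        simpa [sub_sub_sub_cancel_right] using this
      linarith
    rw [← Finset.add_sum_erase S _ hv₀S]
    have hcard : (S.erase v₀).card = m - 1 := by
      rw [Finset.card_erase_of_mem hv₀S, hS]
    have hsum : ∑ _u ∈ S.erase v₀, ((1:ℝ) - ‖x v₀ - c‖)
        ≤ ∑ u ∈ S.erase v₀, ‖x u - c‖ := Finset.sum_le_sum hrest
    rw [Finset.sum_const, hcard, nsmul_eq_mul] at hsum
    have hcast : ((m - 1 : ℕ) : ℝ) = (m : ℝ) - 1 := by
      rw [Nat.cast_sub (by omega)]; simp
    rw [hcast] at hsum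
    have hm' : (2:ℝ) ≤ (m:ℝ) := by exact_mod_cast hm
    nlinarith
end

section
/- Let S ⊆ V with |S| = m, where m = 2 or m ≥ 4, and suppose S contains two adjacent vertices of G. Then for every point c ∈ ℝ^E, Σ_{v∈S} ‖x_v − c‖_∞ ≥ m/2 + 1. -/
open Finset
open scoped InnerProductSpace

/-- If `|S| = m` with `m = 2` or `m ≥ 4`, and `S` contains two
adjacent vertices of `G`, then for every point `c`, `Σ_{v∈S} ‖x_v − c‖_∞ ≥ m/2 + 1`. -/
theorem linf_median_lower_bound_adjacent
    {V E : Type*} [Fintype V] [DecidableEq V] [Fintype E] [DecidableEq E]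
    (G : SimpleGraph V) [DecidableRel G.Adj]
    (hiso : ∀ v : V, ∃ u : V, G.Adj v u)
    (tail head : E → V)
    (hadj : ∀ e : E, G.Adj (tail e) (head e))
    (hinj : ∀ e₁ e₂ : E,
      (s(tail e₁, head e₁) : Sym2 V) = s(tail e₂, head e₂) → e₁ = e₂)
    (hsurj : ∀ u v : V, G.Adj u v → ∃ e : E, (s(tail e, head e) : Sym2 V) = s(u, v))
    (x : V → E → ℝ)
    (hx : ∀ (v : V) (e : E),
      x v e = if tail e = v then 1 else if head e = v then -1 else 0)
    (S : Finset V) (m : ℕ) (hm : m = 2 ∨ 4 ≤ m) (hS : S.card = m)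
    (a b : V) (ha : a ∈ S) (hb : b ∈ S) (hab : G.Adj a b) :
    ∀ c : E → ℝ, (m : ℝ) / 2 + 1 ≤ ∑ v ∈ S, ‖x v - c‖ := by
  intro c
  set f : V → ℝ := fun v => ‖x v - c‖ with hfdef
  have hf0 : ∀ v, 0 ≤ f v := fun v => norm_nonneg _
  have hdist : ∀ u v : V, ‖x u - x v‖ ≤ f u + f v := by
    intro u v
    calc ‖x u - x v‖ ≤ ‖x u - c‖ + ‖c - x v‖ := norm_sub_le_norm_sub_add_norm_sub _ _ _
      _ = f u + f v := by rw [norm_sub_rev c]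
  have habs1 : ∀ u v : V, u ≠ v → (1:ℝ) ≤ ‖x u - x v‖ := by
    intro u v huv
    obtain ⟨w, hw⟩ := hiso u
    obtain ⟨e, he⟩ := hsurj u w hw
    rw [Sym2.eq_iff] at he
    have h1 : (1:ℝ) ≤ |x u e - x v e| := by
      rw [hx, hx]
      rcases he with ⟨h1, h2⟩ | ⟨h1, h2⟩
      · have hv1 : tail e ≠ v := by rw [h1]; exact huv
        rw [if_pos h1, if_neg hv1]
        split_ifs <;> norm_num
      · have hu1 : tail e ≠ u := by rw [h1]; exact hw.ne'
        have hv2 : head e ≠ v := by rw [h2]; exact huv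
        rw [if_neg hu1, if_pos h2, if_neg hv2]
        split_ifs <;> norm_num
    calc (1:ℝ) ≤ |x u e - x v e| := h1
      _ = ‖(x u - x v) e‖ := by rw [Pi.sub_apply, Real.norm_eq_abs]
      _ ≤ ‖x u - x v‖ := norm_le_pi_norm _ e
  have hpair : ∀ u v : V, u ≠ v → (1:ℝ) ≤ f u + f v :=
    fun u v h => (habs1 u v h).trans (hdist u v)
  have hne : a ≠ b := hab.ne
  have habs2 : (2:ℝ) ≤ ‖x a - x b‖ := by
    obtain ⟨e, he⟩ := hsurj a b hab
    rw [Sym2.eq_iff] at he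
    have h1 : (2:ℝ) ≤ |x a e - x b e| := by
      rw [hx, hx]
      rcases he with ⟨h1, h2⟩ | ⟨h1, h2⟩
      · have hb1 : tail e ≠ b := by rw [h1]; exact hne
        have hb2 : head e = b := h2
        rw [if_pos h1, if_neg hb1, if_pos hb2]
        norm_num
      · have ha1 : tail e ≠ a := by rw [h1]; exact hne.symm
        rw [if_neg ha1, if_pos h2, if_pos h1]
        norm_num
    calc (2:ℝ) ≤ |x a e - x b e| := h1
      _ = ‖(x a - x b) e‖ := by rw [Pi.sub_apply, Real.norm_eq_abs]
      _ ≤ ‖x a - x b‖ := norm_le_pi_norm _ e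
  have hab2 : (2:ℝ) ≤ f a + f b := habs2.trans (hdist a b)
  rcases hm with hm2 | hm4
  · -- m = 2 : S = {a, b}
    have hSeq : ({a, b} : Finset V) = S := by
      apply Finset.eq_of_subset_of_card_le
      · intro v hv
        simp only [Finset.mem_insert, Finset.mem_singleton] at hv
        rcases hv with rfl | rfl <;> assumption
      · rw [hS, hm2, Finset.card_pair hne]
    rw [← hSeq, Finset.sum_pair hne, hm2]
    push_cast
    linarith
  · -- m ≥ 4
    have hbS' : b ∈ S.erase a := Finset.mem_erase.2 ⟨hne.symm, hb⟩
    have hsplit : ∑ v ∈ S, f v = f a + f b + ∑ v ∈ (S.erase a).erase b, f v := by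
      rw [← Finset.add_sum_erase S f ha, ← Finset.add_sum_erase _ f hbS', add_assoc]
    have hcard2 : ((S.erase a).erase b).card = m - 2 := by
      rw [Finset.card_erase_of_mem hbS', Finset.card_erase_of_mem ha, hS]
      omega
    have hcast2 : (((S.erase a).erase b).card : ℝ) = (m : ℝ) - 2 := by
      rw [hcard2]; push_cast [Nat.cast_sub (by omega : 2 ≤ m)]; ring
    have hmR : (4:ℝ) ≤ (m : ℝ) := by exact_mod_cast hm4
    by_cases hmin : ∃ w ∈ S, f w < 1/2
    · obtain ⟨w, hwS, hwlt⟩ := hmin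
      have hothers : ∀ v ∈ S, v ≠ w → 1 - f w ≤ f v := by
        intro v hv hvw
        have := hpair v w hvw
        linarith
      by_cases hwab : w = a ∨ w = b
      · -- all erased vertices are ≠ w, hence ≥ 1/2
        have hhalf : ∀ v ∈ (S.erase a).erase b, (1:ℝ)/2 ≤ f v := by
          intro v hv
          have hvb : v ≠ b := (Finset.mem_erase.1 hv).1
          have hva : v ≠ a := (Finset.mem_erase.1 (Finset.mem_erase.1 hv).2).1
          have hvS : v ∈ S := (Finset.mem_erase.1 (Finset.mem_erase.1 hv).2).2
          have hvw : v ≠ w := by rcases hwab with rfl | rfl <;> assumption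
          have := hothers v hvS hvw
          linarith
        have hsum2 : ((m:ℝ) - 2) * (1/2) ≤ ∑ v ∈ (S.erase a).erase b, f v := by
          have h := Finset.card_nsmul_le_sum _ f (1/2) hhalf
          rwa [nsmul_eq_mul, hcast2] at h
        rw [hsplit]
        linarith
      · push_neg at hwab
        have hwS' : w ∈ (S.erase a).erase b :=
          Finset.mem_erase.2 ⟨hwab.2, Finset.mem_erase.2 ⟨hwab.1, hwS⟩⟩
        have hsplit3 : ∑ v ∈ (S.erase a).erase b, f v
            = f w + ∑ v ∈ ((S.erase a).erase b).erase w, f v :=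
          (Finset.add_sum_erase _ f hwS').symm
        have hcast3 : ((((S.erase a).erase b).erase w).card : ℝ) = (m : ℝ) - 3 := by
          rw [Finset.card_erase_of_mem hwS', hcard2,
            (by omega : m - 2 - 1 = m - 3), Nat.cast_sub (by omega : 3 ≤ m)]
          norm_num
        have hbnd : ∀ v ∈ ((S.erase a).erase b).erase w, 1 - f w ≤ f v := by
          intro v hv
          have hvw : v ≠ w := (Finset.mem_erase.1 hv).1
          have hvS : v ∈ S :=
            (Finset.mem_erase.1 (Finset.mem_erase.1 (Finset.mem_erase.1 hv).2).2).2
          exact hothers v hvS hvw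
        have hsum3 : ((m:ℝ) - 3) * (1 - f w) ≤ ∑ v ∈ ((S.erase a).erase b).erase w, f v := by
          have h := Finset.card_nsmul_le_sum _ f (1 - f w) hbnd
          rwa [nsmul_eq_mul, hcast3] at h
        have hkey : (m:ℝ)/2 - 1 - f w ≤ ((m:ℝ) - 3) * (1 - f w) := by
          nlinarith [hwlt, hmR]
        rw [hsplit, hsplit3]
        linarith
    · push_neg at hmin
      have hhalf : ∀ v ∈ (S.erase a).erase b, (1:ℝ)/2 ≤ f v := by
        intro v hv
        exact hmin v (Finset.mem_erase.1 (Finset.mem_erase.1 hv).2).2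
      have hsum2 : ((m:ℝ) - 2) * (1/2) ≤ ∑ v ∈ (S.erase a).erase b, f v := by
        have h := Finset.card_nsmul_le_sum _ f (1/2) hhalf
        rwa [nsmul_eq_mul, hcast2] at h
      rw [hsplit]
      linarith
end
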